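/- For every integer n ≥ 2, the inequality j·(n−j)·(j² − jn + 2(n−1)) > 0 holds for all integers j with 1 ≤ j ≤ n−1 if and only if n ≤ 6. -/
import Mathlib


/-- `j·(n−j)·(j² − jn + 2(n−1)) > 0` for all `1 ≤ j ≤ n−1` iff `n ≤ 6`. -/
theorem product_pos_iff (n : ℕ) (hn : 2 ≤ n) :
    (∀ j : ℕ, 1 ≤ j → j ≤ n - 1 →
        0 < (j : ℤ) * ((n : ℤ) - j) * ((j : ℤ) ^ 2 - j * n + 2 * ((n : ℤ) - 1)))
      ↔ n ≤ 6 := by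
  constructor
  · intro h
    by_contra hn6
    push_neg at hn6
    have h3 := h 3 (by omega) (by omega)
    have hn7 : (7 : ℤ) ≤ (n : ℤ) := by exact_mod_cast hn6
    push_cast at h3
    nlinarith
  · intro h6 j hj1 hj2
    interval_cases n <;> interval_cases j <;> norm_num
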